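/- arXiv:1909.04606 — 8 statements merged into one kernel-verified Lean document; each statement's English description precedes it below -/
import Mathlib

section
/- Let D = {(t, r) ∈ ℂ × ℝ : |t|² < r}. Then D is a convex set and the function f(t, r) = −ln(1 − |t|²/r) is convex on D (jointly in the pair (t, r), viewing ℂ × ℝ as a real vector space). -/
/-!
The function `q(t, r) = |t|² / r` is convex on the half-space `r > 0` (it is the perspective of
`|t|²`), so its sublevel set `D = {q < 1}` is convex, and `f = g ∘ q` with `g(s) = −ln(1 − s)`
convex and nondecreasing on `s < 1`.
-/

open Set Real

lemma ConvexOn.comp_of_mapsTo {𝕜 E α β : Type*} [Semiring 𝕜] [PartialOrder 𝕜]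
    [AddCommMonoid E] [AddCommMonoid α] [PartialOrder α] [AddCommMonoid β] [PartialOrder β]
    [SMul 𝕜 E] [SMul 𝕜 α] [SMul 𝕜 β] {s : Set E} {t : Set β} {f : E → β} {g : β → α}
    (hg : ConvexOn 𝕜 t g) (hf : ConvexOn 𝕜 s f) (hg' : MonotoneOn g t) (hst : MapsTo f s t) :
    ConvexOn 𝕜 s (g ∘ f) :=
  ⟨hf.1, fun _ hx _ hy _ _ ha hb hab =>
    (hg' (hst (hf.1 hx hy ha hb hab)) (hg.1 (hst hx) (hst hy) ha hb hab)
      (hf.2 hx hy ha hb hab)).trans (hg.2 (hst hx) (hst hy) ha hb hab)⟩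

lemma sq_add_div_add_le {a b u v r s : ℝ} (ha : 0 ≤ a) (hb : 0 ≤ b) (hr : 0 < r) (hs : 0 < s) :
    (a * u + b * v) ^ 2 / (a * r + b * s) ≤ a * (u ^ 2 / r) + b * (v ^ 2 / s) := by
  rcases (by positivity : 0 ≤ a * r + b * s).eq_or_lt with h | h
  · rw [← h, div_zero]
    positivity
  have hrhs : a * (u ^ 2 / r) + b * (v ^ 2 / s) = (a * u ^ 2 * s + b * v ^ 2 * r) / (r * s) := by
    field_simp
  rw [hrhs, div_le_div_iff₀ h (by positivity)]
  -- after clearing denominators the gap is exactly `a * b * (u * s - v * r) ^ 2`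
  nlinarith [mul_nonneg (mul_nonneg ha hb) (sq_nonneg (u * s - v * r))]

lemma convexOn_norm_sq_div {E : Type*} [SeminormedAddCommGroup E] [NormedSpace ℝ E] :
    ConvexOn ℝ {p : E × ℝ | 0 < p.2} (fun p => ‖p.1‖ ^ 2 / p.2) := by
  refine ⟨convex_halfSpace_gt (LinearMap.snd ℝ E ℝ).isLinear 0,
    fun x (hx : 0 < x.2) y (hy : 0 < y.2) a b ha hb _ => ?_⟩
  have hnorm : ‖a • x.1 + b • y.1‖ ≤ a * ‖x.1‖ + b * ‖y.1‖ := by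
    simpa only [norm_smul, Real.norm_of_nonneg ha, Real.norm_of_nonneg hb]
      using norm_add_le (a • x.1) (b • y.1)
  calc ‖a • x.1 + b • y.1‖ ^ 2 / (a * x.2 + b * y.2)
      ≤ (a * ‖x.1‖ + b * ‖y.1‖) ^ 2 / (a * x.2 + b * y.2) := by gcongr
    _ ≤ a * (‖x.1‖ ^ 2 / x.2) + b * (‖y.1‖ ^ 2 / y.2) := sq_add_div_add_le ha hb hx hy

lemma convexOn_neg_log_one_sub : ConvexOn ℝ (Iio 1) (fun s : ℝ => -log (1 - s)) := by
  refine ⟨convex_Iio 1, fun x hx y hy a b ha hb hab => ?_⟩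
  have hlog := strictConcaveOn_log_Ioi.concaveOn.2 (mem_Ioi.2 (sub_pos.2 hx))
    (mem_Ioi.2 (sub_pos.2 hy)) ha hb hab
  have hcomb : a • (1 - x) + b • (1 - y) = 1 - (a • x + b • y) := by
    simp only [smul_eq_mul]
    linear_combination hab
  rw [hcomb] at hlog
  simp only [smul_eq_mul] at hlog ⊢
  linarith

lemma monotoneOn_neg_log_one_sub : MonotoneOn (fun s : ℝ => -log (1 - s)) (Iio 1) :=
  fun _ _ _ hy hxy => neg_le_neg (log_le_log (sub_pos.2 hy) (by linarith))

lemma sq_lt_iff_div_lt_one {x r : ℝ} : x ^ 2 < r ↔ 0 < r ∧ x ^ 2 / r < 1 :=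
  ⟨fun h => have hr := (sq_nonneg x).trans_lt h; ⟨hr, (div_lt_one hr).2 h⟩,
    fun ⟨hr, h⟩ => (div_lt_one hr).1 h⟩

/-- The set `D = {(t, r) ∈ ℂ × ℝ : |t|² < r}` is convex and the function
`f(t, r) = −ln(1 − |t|²/r)` is convex on `D` (jointly, over ℝ). -/
theorem stmt0 :
    Convex ℝ {p : ℂ × ℝ | ‖p.1‖ ^ 2 < p.2} ∧
      ConvexOn ℝ {p : ℂ × ℝ | ‖p.1‖ ^ 2 < p.2}
        (fun p : ℂ × ℝ => -Real.log (1 - ‖p.1‖ ^ 2 / p.2)) := by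
  have hD : {p : ℂ × ℝ | ‖p.1‖ ^ 2 < p.2} =
      {p ∈ {p : ℂ × ℝ | 0 < p.2} | ‖p.1‖ ^ 2 / p.2 < 1} :=
    ext fun _ => sq_lt_iff_div_lt_one
  have hq := convexOn_norm_sq_div (E := ℂ)
  have hconvex : Convex ℝ {p : ℂ × ℝ | ‖p.1‖ ^ 2 < p.2} := hD ▸ hq.convex_lt 1
  have hqD := hq.subset (fun p hp => (sq_lt_iff_div_lt_one.1 hp).1) hconvex
  have hmaps : MapsTo (fun p : ℂ × ℝ => ‖p.1‖ ^ 2 / p.2) {p | ‖p.1‖ ^ 2 < p.2} (Iio 1) :=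
    fun _ hp => (sq_lt_iff_div_lt_one.1 hp).2
  exact ⟨hconvex, convexOn_neg_log_one_sub.comp_of_mapsTo hqD monotoneOn_neg_log_one_sub hmaps⟩
end

section
/- For all (t, r) and (t₀, r₀) in ℂ × ℝ with |t|² < r and |t₀|² < r₀, one has −ln(1 − |t|²/r) ≥ −ln(1 − |t₀|²/r₀) + 2·Re( conj(t₀)·(t − t₀) )/(r₀ − |t₀|²) − |t₀|²·(r − r₀)/( r₀·(r₀ − |t₀|²) ). -/
/-!
The map `(x, r) ↦ ‖x‖² / r` is jointly convex on `r > 0` (quadratic over linear), and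
`u ↦ -log (1 - u)` is convex and increasing on `u < 1`. The tangent-plane bound of their
composition is obtained by composing the two tangent bounds: first the tangent line of
`-log (1 - u)` at `u₀ = ‖t₀‖² / r₀`, then the tangent plane of `‖t‖² / r` at `(t₀, r₀)`, which
is legitimate because the slope `1 / (1 - u₀)` is positive.
-/

open Real RealInnerProductSpace

theorem neg_log_one_sub_tangent_le {u u₀ : ℝ} (hu : u < 1) (hu₀ : u₀ < 1) :
    -log (1 - u₀) + (u - u₀) / (1 - u₀) ≤ -log (1 - u) := by
  have hpos : 0 < 1 - u := by linarith
  have hpos₀ : 0 < 1 - u₀ := by linarith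
  have hlog := log_le_sub_one_of_pos (div_pos hpos hpos₀)
  rw [log_div hpos.ne' hpos₀.ne', div_sub_one hpos₀.ne'] at hlog
  have : (1 - u - (1 - u₀)) / (1 - u₀) = -((u - u₀) / (1 - u₀)) := by ring
  linarith

/-- The difference of the two sides is `‖x - (r / r₀) • x₀‖² / r ≥ 0`. -/
theorem norm_sq_div_tangent_le {E : Type*} [NormedAddCommGroup E] [InnerProductSpace ℝ E]
    (x x₀ : E) {r r₀ : ℝ} (hr : 0 < r) (hr₀ : 0 < r₀) :
    ‖x₀‖ ^ 2 / r₀ + 2 * ⟪x₀, x - x₀⟫ / r₀ - ‖x₀‖ ^ 2 * (r - r₀) / r₀ ^ 2 ≤ ‖x‖ ^ 2 / r := by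
  have hsq : 0 ≤ ‖x - (r / r₀) • x₀‖ ^ 2 / r := by positivity
  rw [norm_sub_sq_real, norm_smul, inner_smul_right, real_inner_comm, Real.norm_eq_abs,
    abs_of_pos (div_pos hr hr₀)] at hsq
  rw [inner_sub_right, real_inner_self_eq_norm_sq]
  have key : ‖x‖ ^ 2 / r
        - (‖x₀‖ ^ 2 / r₀ + 2 * (⟪x₀, x⟫ - ‖x₀‖ ^ 2) / r₀ - ‖x₀‖ ^ 2 * (r - r₀) / r₀ ^ 2)
      = (‖x‖ ^ 2 - 2 * (r / r₀ * ⟪x₀, x⟫) + (r / r₀ * ‖x₀‖) ^ 2) / r := by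
    field_simp
    ring
  linarith

/-- first-order (tangent-plane) lower bound of the jointly convex function
`(t, r) ↦ −ln(1 − |t|²/r)` on `{(t, r) : |t|² < r}`. -/
theorem stmt1 (t t₀ : ℂ) (r r₀ : ℝ)
    (h : ‖t‖ ^ 2 < r) (h₀ : ‖t₀‖ ^ 2 < r₀) :
    -Real.log (1 - ‖t‖ ^ 2 / r) ≥
      -Real.log (1 - ‖t₀‖ ^ 2 / r₀)
        + 2 * ((starRingEnd ℂ t₀) * (t - t₀)).re / (r₀ - ‖t₀‖ ^ 2)
        - ‖t₀‖ ^ 2 * (r - r₀) / (r₀ * (r₀ - ‖t₀‖ ^ 2)) := by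
  have hr : 0 < r := (sq_nonneg _).trans_lt h
  have hr₀ : 0 < r₀ := (sq_nonneg _).trans_lt h₀
  have hu : ‖t‖ ^ 2 / r < 1 := (div_lt_one hr).2 h
  have hu₀ : ‖t₀‖ ^ 2 / r₀ < 1 := (div_lt_one hr₀).2 h₀
  have hinner : ⟪t₀, t - t₀⟫ = ((starRingEnd ℂ t₀) * (t - t₀)).re := by
    rw [Complex.inner, mul_comm]
  calc -log (1 - ‖t₀‖ ^ 2 / r₀)
        + 2 * ((starRingEnd ℂ t₀) * (t - t₀)).re / (r₀ - ‖t₀‖ ^ 2)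
        - ‖t₀‖ ^ 2 * (r - r₀) / (r₀ * (r₀ - ‖t₀‖ ^ 2))
      = -log (1 - ‖t₀‖ ^ 2 / r₀) + (‖t₀‖ ^ 2 / r₀ + 2 * ⟪t₀, t - t₀⟫ / r₀
          - ‖t₀‖ ^ 2 * (r - r₀) / r₀ ^ 2 - ‖t₀‖ ^ 2 / r₀) / (1 - ‖t₀‖ ^ 2 / r₀) := by
        rw [hinner]
        field_simp
        ring
    _ ≤ -log (1 - ‖t₀‖ ^ 2 / r₀) + (‖t‖ ^ 2 / r - ‖t₀‖ ^ 2 / r₀) / (1 - ‖t₀‖ ^ 2 / r₀) := by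
        gcongr
        exact norm_sq_div_tangent_le t t₀ hr hr₀
    _ ≤ -log (1 - ‖t‖ ^ 2 / r) := neg_log_one_sub_tangent_le hu hu₀
end

section
/- Fix natural numbers N ≥ 1, M, G ≥ 1, a matrix H ∈ ℂ^{(M+1)×N}, a group index g ∈ {1,…,G}, and σ > 0. For precoders f = (f₁,…,f_G) with each fᵢ ∈ ℂ^N and a vector e ∈ ℂ^{M+1}, define the rate R(f, e) = ln( 1 + |eᴴ H f_g|² / ( Σ_{i≠g} |eᴴ H fᵢ|² + σ² ) ). Given a fixed point (fⁿ, eⁿ), set r₋ = Σ_{i≠g} |(eⁿ)ᴴ H fᵢⁿ|² + σ², r = Σ_{i=1}^{G} |(eⁿ)ᴴ H fᵢⁿ|² + σ², t = (eⁿ)ᴴ H f_gⁿ, a = conj(t)/r₋, b = |t|²/(r₋ · r), and const = R(fⁿ, eⁿ) − b·σ² − b·r. Then for all precoders f and all vectors e ∈ ℂ^{M+1}: R(f, e) ≥ const + 2·Re( a · eᴴ H f_g ) − b · Σ_{i=1}^{G} |eᴴ H fᵢ|². -/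
/-!
Put `U = ‖u‖²`, `T = ‖t‖²` for the signal powers and `y`, `y₀` for the interference plus noise at
the point and at the fixed point. Applying `log x ≤ x - 1` to the ratio of `w₀ = 1 + T / y₀` and
`w = 1 + U / y` gives `log w ≥ log w₀ + ((y₀ + T) U / (y + U) - T) / y₀`. The quadratic-over-linear
term `(y₀ + T) U / (y + U)` is jointly convex in `(u, y)`, so it lies above its tangent
`2 Re (conj t * u) - T (y + U) / (y₀ + T)` at the fixed point; concretely this is the completed
square `‖c u - t‖² ≥ 0` with `c = (y₀ + T) / (y + U)`.
-/

open Matrix ComplexConjugate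

lemma two_mul_re_conj_mul_le (t u : ℂ) {c : ℝ} (hc : 0 < c) :
    2 * (conj t * u).re ≤ c * ‖u‖ ^ 2 + ‖t‖ ^ 2 / c := by
  have hsquare : c * ‖u‖ ^ 2 + ‖t‖ ^ 2 / c - 2 * (conj t * u).re
      = ((c * u.re - t.re) ^ 2 + (c * u.im - t.im) ^ 2) / c := by
    simp only [Complex.sq_norm, Complex.normSq_apply, Complex.mul_re, Complex.conj_re,
      Complex.conj_im]
    field_simp
    ring
  have : 0 ≤ ((c * u.re - t.re) ^ 2 + (c * u.im - t.im) ^ 2) / c := by positivity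
  linarith

lemma log_one_add_norm_sq_div_ge (t u : ℂ) {y₀ y : ℝ} (hy₀ : 0 < y₀) (hy : 0 < y) :
    Real.log (1 + ‖t‖ ^ 2 / y₀) - ‖t‖ ^ 2 / y₀ + 2 * (conj t * u).re / y₀
        - ‖t‖ ^ 2 / (y₀ * (y₀ + ‖t‖ ^ 2)) * (‖u‖ ^ 2 + y)
      ≤ Real.log (1 + ‖u‖ ^ 2 / y) := by
  have hyoung := two_mul_re_conj_mul_le t u
    (c := (y₀ + ‖t‖ ^ 2) / (y + ‖u‖ ^ 2)) (by positivity)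
  set T := ‖t‖ ^ 2
  set U := ‖u‖ ^ 2
  have hr : 0 < y₀ + T := by positivity
  have hS : 0 < y + U := by positivity
  have hw₀ : 0 < 1 + T / y₀ := by positivity
  have hw : 0 < 1 + U / y := by positivity
  have hlog : Real.log (1 + T / y₀) - Real.log (1 + U / y)
      ≤ (1 + T / y₀) / (1 + U / y) - 1 := by
    rw [← Real.log_div hw₀.ne' hw.ne']
    exact Real.log_le_sub_one_of_pos (by positivity)
  have hratio : 1 - (1 + T / y₀) / (1 + U / y) = ((y₀ + T) * U / (y + U) - T) / y₀ := by
    field_simp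
    ring
  have hsplit : ((y₀ + T) / (y + U) * U + T / ((y₀ + T) / (y + U))) / y₀
      = ((y₀ + T) * U / (y + U) - T) / y₀ + T / y₀ + T / (y₀ * (y₀ + T)) * (U + y) := by
    field_simp
    ring
  have hyoung_div : 2 * (conj t * u).re / y₀
      ≤ ((y₀ + T) / (y + U) * U + T / ((y₀ + T) / (y + U))) / y₀ := by
    gcongr
  linarith

theorem stmt2_general (N M G : ℕ)
    (H : Matrix (Fin (M + 1)) (Fin N) ℂ) (g : Fin G) (σ : ℝ) (hσ : 0 < σ)
    (R : (Fin G → Fin N → ℂ) → (Fin (M + 1) → ℂ) → ℝ)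
    (hR : ∀ f e, R f e =
      Real.log (1 + ‖star e ⬝ᵥ H.mulVec (f g)‖ ^ 2 /
        ((∑ i ∈ Finset.univ.erase g, ‖star e ⬝ᵥ H.mulVec (f i)‖ ^ 2) + σ ^ 2)))
    (fn : Fin G → Fin N → ℂ) (en : Fin (M + 1) → ℂ)
    (rm r : ℝ) (t a : ℂ) (b C : ℝ)
    (hrm : rm = (∑ i ∈ Finset.univ.erase g,
        ‖star en ⬝ᵥ H.mulVec (fn i)‖ ^ 2) + σ ^ 2)
    (hr : r = (∑ i, ‖star en ⬝ᵥ H.mulVec (fn i)‖ ^ 2) + σ ^ 2)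
    (ht : t = star en ⬝ᵥ H.mulVec (fn g))
    (ha : a = starRingEnd ℂ t / (rm : ℂ))
    (hb : b = ‖t‖ ^ 2 / (rm * r))
    (hC : C = R fn en - b * σ ^ 2 - b * r) :
    ∀ (f : Fin G → Fin N → ℂ) (e : Fin (M + 1) → ℂ),
      R f e ≥ C + 2 * (a * (star e ⬝ᵥ H.mulVec (f g))).re
        - b * ∑ i, ‖star e ⬝ᵥ H.mulVec (f i)‖ ^ 2 := by
  intro f e
  set x := fun i ↦ star e ⬝ᵥ H.mulVec (f i)
  set y := (∑ i ∈ Finset.univ.erase g, ‖x i‖ ^ 2) + σ ^ 2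
  have hrm_pos : 0 < rm := by rw [hrm]; positivity
  have hRfe : R f e = Real.log (1 + ‖x g‖ ^ 2 / y) := hR f e
  have hRfn : R fn en = Real.log (1 + ‖t‖ ^ 2 / rm) := by rw [hR fn en, ← ht, ← hrm]
  have hr_split : r = rm + ‖t‖ ^ 2 := by
    rw [hr, hrm, ht, ← Finset.sum_erase_add _ _ (Finset.mem_univ g)]
    ring
  have hsum : ∑ i, ‖x i‖ ^ 2 = ‖x g‖ ^ 2 + y - σ ^ 2 := by
    rw [← Finset.sum_erase_add _ _ (Finset.mem_univ g)]
    ring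
  have hRe : (a * x g).re = (conj t * x g).re / rm := by
    rw [ha, div_mul_eq_mul_div, Complex.div_ofReal_re]
  have hy_pos : 0 < y := by positivity
  have hbound := log_one_add_norm_sq_div_ge t (x g) hrm_pos hy_pos
  have hconst : ‖t‖ ^ 2 / (rm * (rm + ‖t‖ ^ 2)) * (rm + ‖t‖ ^ 2) = ‖t‖ ^ 2 / rm := by
    field_simp
  rw [hRfe, hC, hRfn, hb, hsum, hRe, hr_split]
  linear_combination hbound - hconst

/-- Lemma 1 of the paper -- the concave surrogate lower bound of the
multicast SINR rate `R(f, e) = ln(1 + |eᴴHf_g|²/(Σ_{i≠g}|eᴴHfᵢ|² + σ²))`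
around a fixed point `(fⁿ, eⁿ)`. -/
theorem stmt2 (N M G : ℕ) (hN : 1 ≤ N) (hG : 1 ≤ G)
    (H : Matrix (Fin (M + 1)) (Fin N) ℂ) (g : Fin G) (σ : ℝ) (hσ : 0 < σ)
    (R : (Fin G → Fin N → ℂ) → (Fin (M + 1) → ℂ) → ℝ)
    (hR : ∀ f e, R f e =
      Real.log (1 + ‖star e ⬝ᵥ H.mulVec (f g)‖ ^ 2 /
        ((∑ i ∈ Finset.univ.erase g, ‖star e ⬝ᵥ H.mulVec (f i)‖ ^ 2) + σ ^ 2)))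
    (fn : Fin G → Fin N → ℂ) (en : Fin (M + 1) → ℂ)
    (rm r : ℝ) (t a : ℂ) (b C : ℝ)
    (hrm : rm = (∑ i ∈ Finset.univ.erase g,
        ‖star en ⬝ᵥ H.mulVec (fn i)‖ ^ 2) + σ ^ 2)
    (hr : r = (∑ i, ‖star en ⬝ᵥ H.mulVec (fn i)‖ ^ 2) + σ ^ 2)
    (ht : t = star en ⬝ᵥ H.mulVec (fn g))
    (ha : a = starRingEnd ℂ t / (rm : ℂ))
    (hb : b = ‖t‖ ^ 2 / (rm * r))
    (hC : C = R fn en - b * σ ^ 2 - b * r) :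
    ∀ (f : Fin G → Fin N → ℂ) (e : Fin (M + 1) → ℂ),
      R f e ≥ C + 2 * (a * (star e ⬝ᵥ H.mulVec (f g))).re
        - b * ∑ i, ‖star e ⬝ᵥ H.mulVec (f i)‖ ^ 2 :=
  stmt2_general N M G H g σ hσ R hR fn en rm r t a b C hrm hr ht ha hb hC
end

section
/- Let E be a real vector space, S ⊆ E a convex set, ι a nonempty finite index set, μ > 0, and for each k ∈ ι let R_k : E → ℝ be concave on S. Then the smoothed minimum x ↦ −(1/μ)·ln( Σ_{k∈ι} exp(−μ·R_k(x)) ) is concave on S. -/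
open Finset Real

/-- Hölder-type inequality: for positive families `u v` and weights `a + b = 1`,
`∑ u^a v^b ≤ (∑ u)^a (∑ v)^b`. -/
lemma sum_rpow_mul_rpow_le {ι : Type*} [Fintype ι] [Nonempty ι]
    (u v : ι → ℝ) (hu : ∀ k, 0 < u k) (hv : ∀ k, 0 < v k)
    {a b : ℝ} (ha : 0 ≤ a) (hb : 0 ≤ b) (hab : a + b = 1) :
    ∑ k, (u k) ^ a * (v k) ^ b ≤ (∑ k, u k) ^ a * (∑ k, v k) ^ b := by
  have hU : (0:ℝ) < ∑ k, u k := Finset.sum_pos (fun k _ => hu k) Finset.univ_nonempty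
  have hV : (0:ℝ) < ∑ k, v k := Finset.sum_pos (fun k _ => hv k) Finset.univ_nonempty
  have key : ∑ k, (u k / ∑ k, u k) ^ a * (v k / ∑ k, v k) ^ b ≤ 1 := by
    calc ∑ k, (u k / ∑ k, u k) ^ a * (v k / ∑ k, v k) ^ b
        ≤ ∑ k, (a * (u k / ∑ k, u k) + b * (v k / ∑ k, v k)) := by
          refine Finset.sum_le_sum fun k _ => ?_
          exact Real.geom_mean_le_arith_mean2_weighted ha hb
            (div_nonneg (hu k).le hU.le) (div_nonneg (hv k).le hV.le) hab
      _ = a * ((∑ k, u k) / (∑ k, u k)) + b * ((∑ k, v k) / (∑ k, v k)) := by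
          rw [Finset.sum_add_distrib, ← Finset.mul_sum, ← Finset.mul_sum,
            ← Finset.sum_div, ← Finset.sum_div]
      _ = 1 := by rw [div_self hU.ne', div_self hV.ne']; linarith
  have expand : ∀ k, (u k / ∑ k, u k) ^ a * (v k / ∑ k, v k) ^ b
      = ((u k) ^ a * (v k) ^ b) / ((∑ k, u k) ^ a * (∑ k, v k) ^ b) := by
    intro k
    rw [Real.div_rpow (hu k).le hU.le, Real.div_rpow (hv k).le hV.le, div_mul_div_comm]
  rw [Finset.sum_congr rfl (fun k _ => expand k), ← Finset.sum_div,
    div_le_one (by positivity)] at key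
  simpa using key

/-- the log-sum-exp smoothed minimum of finitely many concave functions
over a convex set `S` is concave on `S`. -/
theorem stmt6 {E : Type*} [AddCommGroup E] [Module ℝ E]
    {ι : Type*} [Fintype ι] [Nonempty ι]
    (S : Set E) (hS : Convex ℝ S) (μ : ℝ) (hμ : 0 < μ)
    (R : ι → E → ℝ) (hR : ∀ k, ConcaveOn ℝ S (R k)) :
    ConcaveOn ℝ S (fun x => -(1 / μ) * Real.log (∑ k, Real.exp (-μ * R k x))) := by
  refine ⟨hS, fun x hx y hy a b ha hb hab => ?_⟩
  set u : ι → ℝ := fun k => Real.exp (-μ * R k x) with hu_def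
  set v : ι → ℝ := fun k => Real.exp (-μ * R k y) with hv_def
  have hU : (0:ℝ) < ∑ k, u k := Finset.sum_pos (fun k _ => Real.exp_pos _) Finset.univ_nonempty
  have hV : (0:ℝ) < ∑ k, v k := Finset.sum_pos (fun k _ => Real.exp_pos _) Finset.univ_nonempty
  -- pointwise bound
  have step1 : ∀ k, Real.exp (-μ * R k (a • x + b • y)) ≤ (u k) ^ a * (v k) ^ b := by
    intro k
    have hRk := (hR k).2 hx hy ha hb hab
    rw [smul_eq_mul, smul_eq_mul] at hRk
    have : -μ * R k (a • x + b • y) ≤ a * (-μ * R k x) + b * (-μ * R k y) := by nlinarith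
    calc Real.exp (-μ * R k (a • x + b • y))
        ≤ Real.exp (a * (-μ * R k x) + b * (-μ * R k y)) := Real.exp_le_exp.2 this
      _ = (u k) ^ a * (v k) ^ b := by
          rw [Real.exp_add, mul_comm a, mul_comm b]
          simp only [hu_def, hv_def, ← Real.exp_mul]
  have step2 : ∑ k, Real.exp (-μ * R k (a • x + b • y)) ≤ (∑ k, u k) ^ a * (∑ k, v k) ^ b := by
    calc ∑ k, Real.exp (-μ * R k (a • x + b • y)) ≤ ∑ k, (u k) ^ a * (v k) ^ b :=
          Finset.sum_le_sum fun k _ => step1 k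
      _ ≤ _ := sum_rpow_mul_rpow_le u v (fun k => Real.exp_pos _) (fun k => Real.exp_pos _)
          ha hb hab
  have hlog : Real.log (∑ k, Real.exp (-μ * R k (a • x + b • y)))
      ≤ a * Real.log (∑ k, u k) + b * Real.log (∑ k, v k) := by
    have := Real.log_le_log (Finset.sum_pos (fun k _ => Real.exp_pos _) Finset.univ_nonempty)
      step2
    rwa [Real.log_mul (by positivity) (by positivity), Real.log_rpow hU, Real.log_rpow hV]
      at this
  have hc : (0:ℝ) < 1 / μ := by positivity
  simp only [smul_eq_mul]
  nlinarith [mul_le_mul_of_nonneg_left hlog hc.le]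
end

section
/- Fix N, M, G ≥ 1, μ > 0, a nonempty finite user set K, and for each k ∈ K a matrix H_k ∈ ℂ^{(M+1)×N}, a group index g(k) ∈ {1,…,G}, a scalar a_k ∈ ℂ, reals b_k ≥ 0 and c_k. For F = (f₁,…,f_G) with fᵢ ∈ ℂ^N and e ∈ ℂ^{M+1}, define the quadratic surrogate rate R̃_k(F, e) = c_k + 2·Re( a_k · eᴴ H_k f_{g(k)} ) − b_k · Σ_{i=1}^{G} |eᴴ H_k fᵢ|², and the smoothed group rate f(F, e) = −(1/μ)·ln( Σ_{k∈K} exp(−μ·R̃_k(F, e)) ). Then f is biconcave: for every fixed e, the map F ↦ f(F, e) is concave on ℂ^{N×G}, and for every fixed F, the map e ↦ f(F, e) is concave on ℂ^{M+1} (concavity over the reals). -/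
/-!
For fixed `e` the map `F ↦ eᴴ H_k f_i` is ℝ-linear, and so is `e ↦ eᴴ H_k f_i` for fixed `F`.
In either variable each surrogate rate is therefore a constant plus an ℝ-linear functional
minus a nonnegative combination of squared norms of ℝ-linear maps, hence concave.
Log-sum-exp of convex functions is convex (Hölder's inequality for `∑ exp`), so
`-(1/μ) log ∑ exp (-μ R_k)` of concave `R_k` is concave.
-/

open Real Set

section

variable {E : Type*} [AddCommGroup E] [Module ℝ E] {s : Set E}

lemma convexOn_finset_sum {ι : Type*} (t : Finset ι) {f : ι → E → ℝ} (hs : Convex ℝ s)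
    (hf : ∀ i ∈ t, ConvexOn ℝ s (f i)) : ConvexOn ℝ s fun x => ∑ i ∈ t, f i x := by
  classical
  induction t using Finset.induction_on with
  | empty => simpa using convexOn_const 0 hs
  | insert i t hi ih =>
    simp only [Finset.sum_insert hi]
    exact (hf i (t.mem_insert_self i)).add (ih fun j hj => hf j (Finset.mem_insert_of_mem hj))

/-- Hölder's inequality with exponents `1/p` and `1/q`, written so that `p` or `q` may vanish. -/
lemma Finset.sum_rpow_mul_rpow_le {ι : Type*} (t : Finset ι) {u v : ι → ℝ}
    (hu : ∀ i ∈ t, 0 ≤ u i) (hv : ∀ i ∈ t, 0 ≤ v i)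
    (hU : 0 < ∑ i ∈ t, u i) (hV : 0 < ∑ i ∈ t, v i) {p q : ℝ} (hp : 0 ≤ p) (hq : 0 ≤ q)
    (hpq : p + q = 1) :
    ∑ i ∈ t, u i ^ p * v i ^ q ≤ (∑ i ∈ t, u i) ^ p * (∑ i ∈ t, v i) ^ q := by
  set U := ∑ i ∈ t, u i
  set V := ∑ i ∈ t, v i
  have term_le : ∀ i ∈ t, u i ^ p * v i ^ q ≤ U ^ p * V ^ q * (p * (u i / U) + q * (v i / V)) := by
    intro i hi
    have amgm := geom_mean_le_arith_mean2_weighted hp hq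
      (div_nonneg (hu i hi) hU.le) (div_nonneg (hv i hi) hV.le) hpq
    rw [div_rpow (hu i hi) hU.le, div_rpow (hv i hi) hV.le] at amgm
    have hUp : 0 < U ^ p := rpow_pos_of_pos hU p
    have hVq : 0 < V ^ q := rpow_pos_of_pos hV q
    calc u i ^ p * v i ^ q = U ^ p * V ^ q * (u i ^ p / U ^ p * (v i ^ q / V ^ q)) := by
          field_simp
      _ ≤ _ := mul_le_mul_of_nonneg_left amgm (by positivity)
  calc ∑ i ∈ t, u i ^ p * v i ^ q
      ≤ ∑ i ∈ t, U ^ p * V ^ q * (p * (u i / U) + q * (v i / V)) := Finset.sum_le_sum term_le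
    _ = U ^ p * V ^ q * (p * (U / U) + q * (V / V)) := by
      rw [← Finset.mul_sum, Finset.sum_add_distrib, ← Finset.mul_sum, ← Finset.mul_sum,
        ← Finset.sum_div, ← Finset.sum_div]
    _ = U ^ p * V ^ q := by rw [div_self hU.ne', div_self hV.ne', mul_one, mul_one, hpq, mul_one]

lemma convexOn_log_sum_exp {ι : Type*} [Fintype ι] [Nonempty ι] {g : ι → E → ℝ}
    (hg : ∀ i, ConvexOn ℝ s (g i)) : ConvexOn ℝ s fun x => log (∑ i, exp (g i x)) := by
  have hs : Convex ℝ s := (hg (Classical.arbitrary ι)).1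
  have sum_exp_pos : ∀ x, 0 < ∑ i, exp (g i x) := fun x =>
    Finset.sum_pos (fun i _ => exp_pos _) Finset.univ_nonempty
  refine ⟨hs, fun x hx y hy p q hp hq hpq => ?_⟩
  have sum_exp_le : ∑ i, exp (g i (p • x + q • y))
      ≤ (∑ i, exp (g i x)) ^ p * (∑ i, exp (g i y)) ^ q := calc
    _ ≤ ∑ i, exp (g i x) ^ p * exp (g i y) ^ q := by
      refine Finset.sum_le_sum fun i _ => ?_
      rw [← exp_mul, ← exp_mul, ← exp_add, mul_comm _ p, mul_comm _ q]
      exact exp_le_exp.2 ((hg i).2 hx hy hp hq hpq)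
    _ ≤ _ := Finset.univ.sum_rpow_mul_rpow_le (fun i _ => (exp_pos _).le)
      (fun i _ => (exp_pos _).le) (sum_exp_pos x) (sum_exp_pos y) hp hq hpq
  calc log (∑ i, exp (g i (p • x + q • y)))
      ≤ log ((∑ i, exp (g i x)) ^ p * (∑ i, exp (g i y)) ^ q) :=
        log_le_log (sum_exp_pos _) sum_exp_le
    _ = p • log (∑ i, exp (g i x)) + q • log (∑ i, exp (g i y)) := by
      rw [log_mul (rpow_pos_of_pos (sum_exp_pos x) p).ne' (rpow_pos_of_pos (sum_exp_pos y) q).ne',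
        log_rpow (sum_exp_pos x), log_rpow (sum_exp_pos y), smul_eq_mul, smul_eq_mul]

/-- Log-sum-exp smoothing of `min k, r k`; it tends to the minimum as `μ → ∞`. -/
noncomputable def softMin {ι : Type*} [Fintype ι] (μ : ℝ) (r : ι → ℝ) : ℝ :=
  -(1 / μ) * log (∑ k, exp (-μ * r k))

lemma concaveOn_softMin {ι : Type*} [Fintype ι] [Nonempty ι] {μ : ℝ} (hμ : 0 < μ)
    {R : ι → E → ℝ} (hR : ∀ k, ConcaveOn ℝ s (R k)) :
    ConcaveOn ℝ s fun x => softMin μ fun k => R k x := by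
  have hconv : ∀ k, ConvexOn ℝ s fun x => -μ * R k x := fun k => by
    simpa [smul_eq_mul] using ((hR k).neg.smul hμ.le)
  simpa [softMin, smul_eq_mul] using (convexOn_log_sum_exp hconv).neg.smul (one_div_pos.2 hμ).le

lemma concaveOn_surrogate {ι : Type*} [Fintype ι] (c : ℝ) (a : ℂ) {b : ℝ} (hb : 0 ≤ b)
    (L : ι → E →ₗ[ℝ] ℂ) (j : ι) :
    ConcaveOn ℝ univ fun x => c + 2 * (a * L j x).re - b * ∑ i, ‖L i x‖ ^ 2 := by
  have affine : ConcaveOn ℝ univ fun x => c + 2 * (a * L j x).re :=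
    (concaveOn_const c convex_univ).add <| LinearMap.concaveOn
      ((2 : ℝ) • Complex.reLm ∘ₗ (LinearMap.mulLeft ℂ a).restrictScalars ℝ ∘ₗ L j) convex_univ
  have quadratic : ConvexOn ℝ univ fun x => b * ∑ i, ‖L i x‖ ^ 2 :=
    (convexOn_finset_sum _ convex_univ fun i _ =>
      (convexOn_univ_norm.comp_linearMap (L i)).pow (fun _ _ => norm_nonneg _) 2).smul hb
  exact affine.sub quadratic

end

theorem stmt7_general (N M G : ℕ)
    (μ : ℝ) (hμ : 0 < μ)
    {K : Type*} [Fintype K] [Nonempty K]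
    (H : K → Matrix (Fin (M + 1)) (Fin N) ℂ) (g : K → Fin G)
    (a : K → ℂ) (b : K → ℝ) (hb : ∀ k, 0 ≤ b k) (c : K → ℝ)
    (Rt : K → (Fin G → Fin N → ℂ) → (Fin (M + 1) → ℂ) → ℝ)
    (hRt : ∀ k F e, Rt k F e =
      c k + 2 * (a k * (star e ⬝ᵥ (H k).mulVec (F (g k)))).re
        - b k * ∑ i, ‖star e ⬝ᵥ (H k).mulVec (F i)‖ ^ 2)
    (f : (Fin G → Fin N → ℂ) → (Fin (M + 1) → ℂ) → ℝ)
    (hf : ∀ F e, f F e = -(1 / μ) * Real.log (∑ k, Real.exp (-μ * Rt k F e))) :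
    (∀ e : Fin (M + 1) → ℂ, ConcaveOn ℝ Set.univ fun F : Fin G → Fin N → ℂ => f F e) ∧
    (∀ F : Fin G → Fin N → ℂ, ConcaveOn ℝ Set.univ fun e : Fin (M + 1) → ℂ => f F e) := by
  have f_eq_softMin : ∀ F e, f F e = softMin μ fun k => Rt k F e := fun F e => hf F e
  simp only [f_eq_softMin, hRt]
  refine ⟨fun e => ?_, fun F => ?_⟩
  · let L : K → Fin G → (Fin G → Fin N → ℂ) →ₗ[ℝ] ℂ := fun k i =>
      (dotProductBilin ℂ ℂ (star e) ∘ₗ (H k).mulVecLin ∘ₗ LinearMap.proj i).restrictScalars ℝ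
    have hL : ∀ k i F, L k i F = star e ⬝ᵥ (H k).mulVec (F i) := fun _ _ _ => rfl
    simpa only [hL] using
      concaveOn_softMin hμ fun k => concaveOn_surrogate (c k) (a k) (hb k) (L k) (g k)
  · let L : K → Fin G → (Fin (M + 1) → ℂ) →ₗ[ℝ] ℂ := fun k i =>
      (dotProductBilin ℝ ℝ).flip ((H k).mulVec (F i)) ∘ₗ (starL' ℝ).toLinearMap
    have hL : ∀ k i e, L k i e = star e ⬝ᵥ (H k).mulVec (F i) := fun _ _ _ => rfl
    simpa only [hL] using
      concaveOn_softMin hμ fun k => concaveOn_surrogate (c k) (a k) (hb k) (L k) (g k)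

/-- Theorem 2 of the paper: the log-sum-exp smoothed quadratic surrogate
objective of a multicast group is biconcave in the precoding matrix `F` (columns
`f₁,…,f_G ∈ ℂ^N`) and the reflection coefficient vector `e ∈ ℂ^{M+1}`,
concavity being over ℝ. -/
theorem stmt7 (N M G : ℕ) (hN : 1 ≤ N) (hM : 1 ≤ M) (hG : 1 ≤ G)
    (μ : ℝ) (hμ : 0 < μ)
    {K : Type*} [Fintype K] [Nonempty K]
    (H : K → Matrix (Fin (M + 1)) (Fin N) ℂ) (g : K → Fin G)
    (a : K → ℂ) (b : K → ℝ) (hb : ∀ k, 0 ≤ b k) (c : K → ℝ)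
    (Rt : K → (Fin G → Fin N → ℂ) → (Fin (M + 1) → ℂ) → ℝ)
    (hRt : ∀ k F e, Rt k F e =
      c k + 2 * (a k * (star e ⬝ᵥ (H k).mulVec (F (g k)))).re
        - b k * ∑ i, ‖star e ⬝ᵥ (H k).mulVec (F i)‖ ^ 2)
    (f : (Fin G → Fin N → ℂ) → (Fin (M + 1) → ℂ) → ℝ)
    (hf : ∀ F e, f F e = -(1 / μ) * Real.log (∑ k, Real.exp (-μ * Rt k F e))) :
    (∀ e : Fin (M + 1) → ℂ, ConcaveOn ℝ Set.univ fun F : Fin G → Fin N → ℂ => f F e) ∧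
    (∀ F : Fin G → Fin N → ℂ, ConcaveOn ℝ Set.univ fun e : Fin (M + 1) → ℂ => f F e) :=
  stmt7_general N M G μ hμ H g a b hb c Rt hRt f hf
end

section
/- Let α < 0, P > 0, and U ∈ ℂ^{N×G}. Define F* = (−1/α)·U if ‖U‖_F² ≤ α²·P, and F* = √P·U/‖U‖_F otherwise. Then ‖F*‖_F² ≤ P, and for every F ∈ ℂ^{N×G} with ‖F‖_F² ≤ P: 2·Re( Tr[Uᴴ F] ) + α·‖F‖_F² ≤ 2·Re( Tr[Uᴴ F*] ) + α·‖F*‖_F². That is, F* is a global maximizer of the concave quadratic 2·Re(Tr[Uᴴ F]) + α·Tr[Fᴴ F] over the Frobenius ball ‖F‖_F² ≤ P. -/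
open Matrix

/-- Squared Frobenius norm of a complex matrix. -/
noncomputable def frobSq {m n : Type*} [Fintype m] [Fintype n] (X : Matrix m n ℂ) : ℝ :=
  ∑ i, ∑ j, ‖X i j‖ ^ 2

/-- Frobenius norm of a complex matrix. -/
noncomputable def frob {m n : Type*} [Fintype m] [Fintype n] (X : Matrix m n ℂ) : ℝ :=
  Real.sqrt (frobSq X)

/-! Vectorising a matrix turns `frobSq` into a squared Euclidean norm and `Re Tr(Uᴴ F)` into
`Re ⟪u, f⟫`, so it suffices to maximise `2 Re ⟪u, f⟫ + α ‖f‖²` over the ball `‖f‖² ≤ P` of an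
inner product space. Completing the square, `α (2 Re ⟪u, f⟫ + α ‖f‖²) = ‖u + α f‖² - ‖u‖²`,
so the unconstrained maximum `-‖u‖² / α` is attained at `f = -u / α`, which is feasible exactly
when `‖u‖² ≤ α² P`. Otherwise Cauchy–Schwarz bounds the objective by `2 t ‖u‖ + α t²` with
`t = ‖f‖ ≤ √P`, a parabola increasing up to `t = √P`, where `√P u / ‖u‖` attains it. -/

section ClosedForm

open RCLike

variable (𝕜 : Type*) {E : Type*} [RCLike 𝕜] [SeminormedAddCommGroup E] [InnerProductSpace 𝕜 E]

def precoderObjective (α : ℝ) (u f : E) : ℝ :=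
  2 * re (inner 𝕜 u f) + α * ‖f‖ ^ 2

noncomputable def closedFormPrecoder (α P : ℝ) (u : E) : E :=
  if ‖u‖ ^ 2 ≤ α ^ 2 * P then ((-(1 / α) : ℝ) : 𝕜) • u else ((√P / ‖u‖ : ℝ) : 𝕜) • u

variable {𝕜} {α P : ℝ}

lemma precoderObjective_ofReal_smul (u : E) (c : ℝ) :
    precoderObjective 𝕜 α u ((c : 𝕜) • u) = (2 * c + α * c ^ 2) * ‖u‖ ^ 2 := by
  rw [precoderObjective, inner_smul_right, inner_self_eq_norm_sq_to_K, norm_smul, norm_ofReal,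
    mul_pow, sq_abs, ← ofReal_pow, ← ofReal_mul, ofReal_re]
  ring

lemma precoderObjective_le_neg_div (hα : α < 0) (u f : E) :
    precoderObjective 𝕜 α u f ≤ -‖u‖ ^ 2 / α := by
  have hexpand : ‖u + (α : 𝕜) • f‖ ^ 2 = ‖u‖ ^ 2 + α * precoderObjective 𝕜 α u f := by
    rw [norm_add_sq (𝕜 := 𝕜), inner_smul_right, re_ofReal_mul, norm_smul, norm_ofReal, mul_pow,
      sq_abs, precoderObjective]
    ring
  rw [le_div_iff_of_neg hα]
  nlinarith [sq_nonneg ‖u + (α : 𝕜) • f‖]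

lemma precoderObjective_le_of_norm_le (hα : α ≤ 0) {u f : E} {r : ℝ} (hf : ‖f‖ ≤ r)
    (hr : -α * r ≤ ‖u‖) :
    precoderObjective 𝕜 α u f ≤ 2 * r * ‖u‖ + α * r ^ 2 := by
  have hcs : re (inner 𝕜 u f) ≤ ‖u‖ * ‖f‖ := (re_le_norm _).trans (norm_inner_le_norm u f)
  have hmono : 0 ≤ (r - ‖f‖) * (2 * ‖u‖ + α * (r + ‖f‖)) :=
    mul_nonneg (by linarith) (by nlinarith [norm_nonneg f])
  rw [precoderObjective]
  nlinarith [norm_nonneg u, norm_nonneg f]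

lemma norm_sq_closedFormPrecoder_le (hα : α < 0) (hP : 0 ≤ P) (u : E) :
    ‖closedFormPrecoder 𝕜 α P u‖ ^ 2 ≤ P := by
  rw [closedFormPrecoder]
  split_ifs with hu
  · rw [norm_smul, norm_ofReal, mul_pow, sq_abs, neg_sq, one_div, inv_pow,
      inv_mul_le_iff₀ (sq_pos_of_neg hα)]
    exact hu
  · have hu0 : 0 < ‖u‖ := by nlinarith [norm_nonneg u, sq_nonneg α]
    rw [norm_smul, norm_ofReal, abs_of_nonneg (by positivity), div_mul_cancel₀ _ hu0.ne',
      Real.sq_sqrt hP]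

lemma precoderObjective_le_closedFormPrecoder (hα : α < 0) (hP : 0 ≤ P) (u : E) {f : E}
    (hf : ‖f‖ ^ 2 ≤ P) :
    precoderObjective 𝕜 α u f ≤ precoderObjective 𝕜 α u (closedFormPrecoder 𝕜 α P u) := by
  rw [closedFormPrecoder]
  split_ifs with hu
  · rw [precoderObjective_ofReal_smul]
    convert precoderObjective_le_neg_div hα u f using 1
    field_simp
    ring
  · have hu0 : 0 < ‖u‖ := by nlinarith [norm_nonneg u, sq_nonneg α]
    have hr : -α * √P ≤ ‖u‖ := by
      refine (lt_of_pow_lt_pow_left₀ 2 (norm_nonneg u) ?_).le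
      rw [mul_pow, neg_sq, Real.sq_sqrt hP]
      exact not_le.mp hu
    rw [precoderObjective_ofReal_smul]
    convert precoderObjective_le_of_norm_le hα.le (Real.le_sqrt_of_sq_le hf) hr using 1
    field_simp

end ClosedForm

section Vectorization

variable {m n : Type*}

lemma toLp_vec_real_smul (r : ℝ) (X : Matrix m n ℂ) :
    WithLp.toLp 2 (r • X).vec = (r : ℂ) • WithLp.toLp 2 X.vec := by
  rw [vec_smul, ← WithLp.toLp_smul, Complex.coe_smul]

variable [Fintype m] [Fintype n]

lemma frobSq_eq_norm_sq_toLp_vec (X : Matrix m n ℂ) : frobSq X = ‖WithLp.toLp 2 X.vec‖ ^ 2 := by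
  rw [EuclideanSpace.norm_sq_eq, frobSq, Fintype.sum_prod_type, Finset.sum_comm]
  rfl

lemma frob_eq_norm_toLp_vec (X : Matrix m n ℂ) : frob X = ‖WithLp.toLp 2 X.vec‖ := by
  rw [frob, frobSq_eq_norm_sq_toLp_vec, Real.sqrt_sq (norm_nonneg _)]

lemma trace_conjTranspose_mul_eq_inner (U F : Matrix m n ℂ) :
    (Uᴴ * F).trace = inner ℂ (WithLp.toLp 2 U.vec) (WithLp.toLp 2 F.vec) := by
  rw [EuclideanSpace.inner_toLp_toLp, dotProduct_comm, star_vec_dotProduct_vec]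

end Vectorization

/-- eqs. (30)–(32) of the paper: closed-form solution of the precoder
subproblem. For `α < 0`, `P > 0`, `F* = (−1/α)U` if `‖U‖_F² ≤ α²P` and
`F* = √P·U/‖U‖_F` otherwise, `F*` is feasible and globally maximizes
`2·Re(Tr[Uᴴ F]) + α‖F‖_F²` over the Frobenius ball `‖F‖_F² ≤ P`. -/
theorem stmt12 (N G : ℕ) (α P : ℝ) (hα : α < 0) (hP : 0 < P)
    (U : Matrix (Fin N) (Fin G) ℂ)
    (Fstar : Matrix (Fin N) (Fin G) ℂ)
    (hFstar : Fstar = if frobSq U ≤ α ^ 2 * P then (-(1 / α)) • U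
        else (Real.sqrt P / frob U) • U) :
    frobSq Fstar ≤ P ∧
    ∀ F : Matrix (Fin N) (Fin G) ℂ, frobSq F ≤ P →
      2 * (Matrix.trace (U.conjTranspose * F)).re + α * frobSq F ≤
        2 * (Matrix.trace (U.conjTranspose * Fstar)).re + α * frobSq Fstar := by
  have hvec : WithLp.toLp 2 Fstar.vec = closedFormPrecoder ℂ α P (WithLp.toLp 2 U.vec) := by
    rw [hFstar, closedFormPrecoder, ← frobSq_eq_norm_sq_toLp_vec, ← frob_eq_norm_toLp_vec]
    split_ifs <;> exact toLp_vec_real_smul _ _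
  simp only [frobSq_eq_norm_sq_toLp_vec, trace_conjTranspose_mul_eq_inner, hvec]
  exact ⟨norm_sq_closedFormPrecoder_le hα hP.le _,
    fun F hF => precoderObjective_le_closedFormPrecoder (𝕜 := ℂ) hα hP.le _ hF⟩
end

section
/- Let n ≥ 1, A ∈ ℂ^{n×n}, a ∈ ℂⁿ, and ν ∈ ℝ be such that ν·I − A Aᴴ is positive semidefinite. Then for every e ∈ ℂⁿ with |e_m| ≤ 1 for all m: ‖a − Aᴴ e‖₂² ≤ ‖a‖₂² + n·ν + 2·Σ_{m=1}^{n} |(A a)_m|, i.e., ‖a − Aᴴ e‖₂² ≤ ‖a‖₂² + n·ν + 2·‖A a‖₁. -/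
open Matrix
open scoped ComplexOrder

/-! Expanding the square, `‖a - Aᴴe‖² = ‖a‖² - 2 Re ⟨Aᴴe, a⟩ + ‖Aᴴe‖²`. The cross term is
`Re ⟨e, Aa⟩`, bounded in absolute value by `‖Aa‖₁` because `|e_m| ≤ 1`. Since `νI - AAᴴ ⪰ 0`,
`‖Aᴴe‖² ≤ ν ‖e‖² ≤ nν`, where `ν ≥ 0` because `ν = (νI - AAᴴ)ᵢᵢ + (AAᴴ)ᵢᵢ`. -/

theorem norm_dotProduct_le_sum_norm {R : Type*} [NonUnitalSeminormedRing R] {n : Type*}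
    [Fintype n] {e : n → R} (he : ∀ i, ‖e i‖ ≤ 1) (c : n → R) : ‖e ⬝ᵥ c‖ ≤ ∑ i, ‖c i‖ :=
  (norm_sum_le _ _).trans <| Finset.sum_le_sum fun i _ =>
    (norm_mul_le _ _).trans <| mul_le_of_le_one_left (norm_nonneg _) (he i)

theorem sum_norm_sq_le_card {E : Type*} [SeminormedAddGroup E] {n : Type*} [Fintype n]
    {e : n → E} (he : ∀ i, ‖e i‖ ≤ 1) : ∑ i, ‖e i‖ ^ 2 ≤ Fintype.card n := by
  simpa using Finset.sum_le_sum fun i (_ : i ∈ Finset.univ) => pow_le_one₀ (norm_nonneg _) (he i)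

theorem conjTranspose_mulVec_dotProduct_star {R : Type*} [CommSemiring R] [StarRing R]
    {m n : Type*} [Fintype m] [Fintype n] (A : Matrix m n R) (e : m → R) (a : n → R) :
    (Aᴴ *ᵥ e) ⬝ᵥ star a = e ⬝ᵥ star (A *ᵥ a) := by
  rw [star_mulVec, dotProduct_comm e, ← dotProduct_mulVec, dotProduct_comm]

section RCLike

variable {𝕜 : Type*} [RCLike 𝕜] {m n : Type*} [Fintype m] [Fintype n] [DecidableEq m]

open WithLp in
theorem sum_norm_sub_sq (x y : n → 𝕜) :
    ∑ i, ‖(x - y) i‖ ^ 2 = ∑ i, ‖x i‖ ^ 2 - 2 * RCLike.re (y ⬝ᵥ star x) + ∑ i, ‖y i‖ ^ 2 := by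
  simpa [EuclideanSpace.norm_sq_eq, EuclideanSpace.inner_toLp_toLp] using
    norm_sub_sq (𝕜 := 𝕜) (toLp 2 x) (toLp 2 y)

theorem star_dotProduct_self_eq_sum_norm_sq (v : n → 𝕜) :
    star v ⬝ᵥ v = ((∑ i, ‖v i‖ ^ 2 : ℝ) : 𝕜) := by
  simp [dotProduct, RCLike.conj_mul]

theorem Matrix.PosSemidef.sum_norm_sq_conjTranspose_mulVec_le {A : Matrix m n 𝕜} {ν : ℝ}
    (hν : (ν • (1 : Matrix m m 𝕜) - A * Aᴴ).PosSemidef) (v : m → 𝕜) :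
    ∑ j, ‖(Aᴴ *ᵥ v) j‖ ^ 2 ≤ ν * ∑ i, ‖v i‖ ^ 2 := by
  have hgram : star v ⬝ᵥ (A * Aᴴ) *ᵥ v = star (Aᴴ *ᵥ v) ⬝ᵥ Aᴴ *ᵥ v := by
    rw [← mulVec_mulVec, dotProduct_mulVec, star_mulVec, conjTranspose_conjTranspose]
  have h := hν.dotProduct_mulVec_nonneg v
  rw [sub_mulVec, dotProduct_sub, hgram, smul_mulVec, one_mulVec, dotProduct_smul,
    star_dotProduct_self_eq_sum_norm_sq, star_dotProduct_self_eq_sum_norm_sq,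
    RCLike.real_smul_eq_coe_mul, ← RCLike.ofReal_mul, ← RCLike.ofReal_sub,
    RCLike.ofReal_nonneg] at h
  linarith

theorem Matrix.PosSemidef.nonneg_of_smul_one_sub_mul_conjTranspose [Nonempty m]
    {A : Matrix m n 𝕜} {ν : ℝ} (hν : (ν • (1 : Matrix m m 𝕜) - A * Aᴴ).PosSemidef) : 0 ≤ ν := by
  obtain ⟨i⟩ := ‹Nonempty m›
  have h := add_nonneg (hν.diag_nonneg (i := i))
    ((posSemidef_self_mul_conjTranspose A).diag_nonneg (i := i))
  simpa [RCLike.real_smul_eq_coe_mul] using h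

end RCLike

/-- bound `tp2_k`, eq. (35)/Appendix D of the paper: if `ν·I − AAᴴ ⪰ 0`,
then for every `e` with `|e_m| ≤ 1` for all `m`,
`‖a − Aᴴe‖₂² ≤ ‖a‖₂² + n·ν + 2·‖Aa‖₁`. -/
theorem stmt14 (n : ℕ) (hn : 1 ≤ n)
    (A : Matrix (Fin n) (Fin n) ℂ) (a : Fin n → ℂ) (ν : ℝ)
    (hν : (ν • (1 : Matrix (Fin n) (Fin n) ℂ) - A * A.conjTranspose).PosSemidef) :
    ∀ e : Fin n → ℂ, (∀ m, ‖e m‖ ≤ 1) →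
      (∑ m, ‖(a - A.conjTranspose.mulVec e) m‖ ^ 2) ≤
        (∑ m, ‖a m‖ ^ 2) + n * ν + 2 * ∑ m, ‖A.mulVec a m‖ := by
  intro e he
  have : Nonempty (Fin n) := ⟨⟨0, hn⟩⟩
  have hreflected : ∑ m, ‖(Aᴴ *ᵥ e) m‖ ^ 2 ≤ n * ν :=
    calc ∑ m, ‖(Aᴴ *ᵥ e) m‖ ^ 2 ≤ ν * ∑ m, ‖e m‖ ^ 2 := hν.sum_norm_sq_conjTranspose_mulVec_le e
      _ ≤ ν * n := by
        gcongr
        · exact hν.nonneg_of_smul_one_sub_mul_conjTranspose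
        · simpa using sum_norm_sq_le_card he
      _ = n * ν := mul_comm _ _
  have hcross : -RCLike.re (e ⬝ᵥ star (A *ᵥ a)) ≤ ∑ m, ‖(A *ᵥ a) m‖ :=
    calc -RCLike.re (e ⬝ᵥ star (A *ᵥ a)) ≤ ‖e ⬝ᵥ star (A *ᵥ a)‖ :=
          (neg_le_abs _).trans (RCLike.abs_re_le_norm _)
      _ ≤ ∑ m, ‖(A *ᵥ a) m‖ := by simpa using norm_dotProduct_le_sum_norm he (star (A *ᵥ a))
  rw [sum_norm_sub_sq, conjTranspose_mulVec_dotProduct_star]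
  linarith
end

section
/- Fix N, M, G ≥ 1, P > 0, μ > 0, a nonempty finite user set K, a fixed vector e ∈ ℂ^{M+1}, and for each k ∈ K: a matrix H_k ∈ ℂ^{(M+1)×N}, a group index g(k) ∈ {1,…,G}, a_k ∈ ℂ, b_k ≥ 0, c_k ∈ ℝ. Define B_k = b_k·H_kᴴ e eᴴ H_k ∈ ℂ^{N×N} and C_k ∈ ℂ^{N×G} as the matrix whose g(k)-th column is conj(a_k)·H_kᴴ e and whose other columns are zero, so that the surrogate rate is R̃_k(F) = c_k + 2·Re(Tr[C_kᴴ F]) − Tr[Fᴴ B_k F], and set f(F) = −(1/μ)·ln( Σ_{k∈K} exp(−μ·R̃_k(F)) ). Given Fⁿ ∈ ℂ^{N×G} with ‖Fⁿ‖_F² ≤ P, define the softmax weights g_k(Fⁿ) = exp(−μ·R̃_k(Fⁿ))/Σ_{j∈K} exp(−μ·R̃_j(Fⁿ)), the constants tp_k = P·b_k²·|eᴴ H_k H_kᴴ e|² + ‖C_k‖_F² + 2·√P·‖B_k C_k‖_F, α = −max_{k∈K}{ b_k·eᴴ H_k H_kᴴ e } − 2μ·max_{k∈K}{ tp_k } (here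 eᴴ H_k H_kᴴ e is a nonnegative real), D = Σ_{k∈K} g_k(Fⁿ)·(C_k − B_k Fⁿ), U = D − α·Fⁿ, and consF = f(Fⁿ) + α·‖Fⁿ‖_F² − 2·Re(Tr[Dᴴ Fⁿ]). Then for every F ∈ ℂ^{N×G} with ‖F‖_F² ≤ P: f(F) ≥ 2·Re(Tr[Uᴴ F]) + α·‖F‖_F² + consF, and equality holds at F = Fⁿ. -/
open Matrix

/-!
`f` is the soft minimum `-(1/μ) log ∑ₖ exp(-μ R̃ₖ)` of the surrogate rates. Factoring out
`∑ₖ exp(-μ R̃ₖ(Fⁿ))` leaves the softmax average `∑ₖ gₖ exp(-μ (R̃ₖ(F) - R̃ₖ(Fⁿ)))`, which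
Hoeffding's lemma bounds by `exp(-μ ∑ₖ gₖ (R̃ₖ(F) - R̃ₖ(Fⁿ)) + μ² s² / 2)` when all increments lie
in `[-s, s]`. On the ball `‖F‖_F² ≤ P` the increments are at most
`2 (‖Cₖ‖_F + √P ‖Bₖ‖_F) ‖F - Fⁿ‖_F`, and the weighted increment is `2 Re Tr(Dᴴ (F - Fⁿ))` minus
quadratic terms at most `‖Bₖ‖_F ‖F - Fⁿ‖_F²`. For the rank-one `Bₖ = bₖ hₖ hₖᴴ` with
`hₖ = Hₖᴴ e` one has `‖Bₖ‖_F = bₖ eᴴHₖHₖᴴe`, and since every column of `Cₖ` is a multiple of `hₖ`,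
`‖BₖCₖ‖_F = ‖Bₖ‖_F ‖Cₖ‖_F`; hence `tpₖ = (‖Cₖ‖_F + √P ‖Bₖ‖_F)²` and `α` absorbs both error terms.
-/

open Real WithLp

theorem sum_mul_exp_le_exp_add {ι : Type*} [Fintype ι] (w t : ι → ℝ) (hw : ∀ i, 0 ≤ w i)
    (hw1 : ∑ i, w i = 1) {a b : ℝ} (ht : ∀ i, t i ∈ Set.Icc a b) :
    ∑ i, w i * exp (t i) ≤ exp (∑ i, w i * t i + (b - a) ^ 2 / 8) := by
  let _ : MeasurableSpace ι := ⊤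
  let p : PMF ι := PMF.ofFintype (fun i => ENNReal.ofReal (w i)) <| by
    rw [← ENNReal.ofReal_sum_of_nonneg fun i _ => hw i, hw1, ENNReal.ofReal_one]
  have hp : ∀ i, (p i).toReal = w i := fun i => ENNReal.toReal_ofReal (hw i)
  have hmean : ∫ i, t i ∂p.toMeasure = ∑ i, w i * t i := by
    simp [PMF.integral_eq_sum, hp]
  have hhoeff := (ProbabilityTheory.hasSubgaussianMGF_of_mem_Icc (μ := p.toMeasure) (X := t)
    (measurable_of_countable t).aemeasurable (Filter.Eventually.of_forall ht)).mgf_le 1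
  rw [hmean, ProbabilityTheory.mgf, PMF.integral_eq_sum] at hhoeff
  simp only [hp, one_mul, smul_eq_mul, exp_sub, one_pow, mul_one] at hhoeff
  have hc : (((‖b - a‖₊ / 2) ^ 2 : NNReal) : ℝ) = (b - a) ^ 2 / 4 := by
    norm_num [div_pow, sq_abs]
  simp only [mul_div_assoc', ← Finset.sum_div, hc] at hhoeff
  rw [div_le_iff₀ (exp_pos _), ← exp_add] at hhoeff
  exact hhoeff.trans_eq (congrArg exp (by ring))

section SmoothMin

variable {K : Type*} [Fintype K]

noncomputable def smoothMin (μ : ℝ) (x : K → ℝ) : ℝ :=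
  -(1 / μ) * log (∑ k, exp (-μ * x k))

noncomputable def smoothMinWeight (μ : ℝ) (x : K → ℝ) (k : K) : ℝ :=
  exp (-μ * x k) / ∑ j, exp (-μ * x j)

variable [Nonempty K]

lemma sum_exp_pos (x : K → ℝ) : 0 < ∑ k, exp (x k) :=
  Finset.sum_pos (fun _ _ => exp_pos _) Finset.univ_nonempty

lemma smoothMinWeight_pos (μ : ℝ) (x : K → ℝ) (k : K) : 0 < smoothMinWeight μ x k :=
  div_pos (exp_pos _) (sum_exp_pos _)

lemma sum_smoothMinWeight (μ : ℝ) (x : K → ℝ) : ∑ k, smoothMinWeight μ x k = 1 := by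
  simp only [smoothMinWeight, ← Finset.sum_div, div_self (sum_exp_pos _).ne']

theorem smoothMin_add_sum_smoothMinWeight_le {μ s : ℝ} (hμ : 0 < μ) {x y : K → ℝ}
    (hxy : ∀ k, |x k - y k| ≤ s) :
    smoothMin μ y + ∑ k, smoothMinWeight μ y k * (x k - y k) - μ * s ^ 2 / 2 ≤
      smoothMin μ x := by
  set w := smoothMinWeight μ y
  have hpos : 0 < ∑ k, w k * exp (-μ * (x k - y k)) := Finset.sum_pos
    (fun k _ => mul_pos (smoothMinWeight_pos μ y k) (exp_pos _)) Finset.univ_nonempty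
  have hfactor : ∑ k, exp (-μ * x k) =
      (∑ k, exp (-μ * y k)) * ∑ k, w k * exp (-μ * (x k - y k)) := by
    simp only [w, smoothMinWeight, Finset.mul_sum, div_mul_eq_mul_div, mul_div_assoc',
      mul_div_cancel_left₀ _ (sum_exp_pos _).ne', ← exp_add]
    congr! 2
    ring
  have hmean : ∑ k, w k * (-μ * (x k - y k)) = -μ * ∑ k, w k * (x k - y k) := by
    rw [Finset.mul_sum]
    exact Finset.sum_congr rfl fun k _ => by ring
  have hlog : log (∑ k, w k * exp (-μ * (x k - y k))) ≤
      -μ * ∑ k, w k * (x k - y k) + μ ^ 2 * s ^ 2 / 2 := by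
    rw [log_le_iff_le_exp hpos, ← hmean]
    refine (sum_mul_exp_le_exp_add w _ (fun k => (smoothMinWeight_pos μ y k).le)
      (sum_smoothMinWeight μ y) (a := -(μ * s)) (b := μ * s) fun k => ?_).trans_eq
      (congrArg exp (by ring))
    have := abs_le.mp (hxy k)
    constructor <;> nlinarith
  have hscale := mul_le_mul_of_nonpos_left hlog (by simpa using hμ.le : -(1 / μ) ≤ 0)
  have hrhs : -(1 / μ) * (-μ * ∑ k, w k * (x k - y k) + μ ^ 2 * s ^ 2 / 2) =
      ∑ k, w k * (x k - y k) - μ * s ^ 2 / 2 := by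
    field_simp
    ring
  rw [smoothMin, smoothMin, hfactor, log_mul (sum_exp_pos _).ne' hpos.ne', mul_add]
  linarith

end SmoothMin

section Frobenius

variable {l m n : Type*}

def toFrobeniusLp (X : Matrix m n ℂ) : PiLp 2 fun _ : m => EuclideanSpace ℂ n :=
  toLp 2 fun i => toLp 2 (X i)

lemma toFrobeniusLp_add (X Y : Matrix m n ℂ) :
    toFrobeniusLp (X + Y) = toFrobeniusLp X + toFrobeniusLp Y := rfl

lemma toFrobeniusLp_sub (X Y : Matrix m n ℂ) :
    toFrobeniusLp (X - Y) = toFrobeniusLp X - toFrobeniusLp Y := rfl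

lemma toFrobeniusLp_smul (r : ℝ) (X : Matrix m n ℂ) :
    toFrobeniusLp (r • X) = r • toFrobeniusLp X := rfl

variable [Fintype l] [Fintype m] [Fintype n]

lemma frob_eq_norm_toFrobeniusLp (X : Matrix m n ℂ) : frob X = ‖toFrobeniusLp X‖ := by
  simp only [frob, frobSq, toFrobeniusLp, PiLp.norm_eq_of_L2]
  congr 1
  exact Finset.sum_congr rfl fun i _ => (Real.sq_sqrt (by positivity)).symm

lemma frob_nonneg (X : Matrix m n ℂ) : 0 ≤ frob X := Real.sqrt_nonneg _

lemma frobSq_eq_frob_sq (X : Matrix m n ℂ) : frobSq X = frob X ^ 2 :=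
  (Real.sq_sqrt (by unfold frobSq; positivity)).symm

lemma inner_toFrobeniusLp (X Y : Matrix m n ℂ) :
    inner ℂ (toFrobeniusLp X) (toFrobeniusLp Y) = trace (Xᴴ * Y) := by
  simp [toFrobeniusLp, PiLp.inner_apply, trace, mul_apply, Finset.sum_comm (γ := n), mul_comm]

lemma abs_re_trace_conjTranspose_mul_le (X Y : Matrix m n ℂ) :
    |(trace (Xᴴ * Y)).re| ≤ frob X * frob Y := by
  rw [frob_eq_norm_toFrobeniusLp, frob_eq_norm_toFrobeniusLp, ← inner_toFrobeniusLp]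
  exact (Complex.abs_re_le_norm _).trans (norm_inner_le_norm _ _)

lemma frob_sub_sq (X Y : Matrix m n ℂ) :
    frob (X - Y) ^ 2 = frob X ^ 2 - 2 * (trace (Yᴴ * X)).re + frob Y ^ 2 := by
  simp only [frob_eq_norm_toFrobeniusLp, ← inner_toFrobeniusLp, toFrobeniusLp_sub]
  rw [norm_sub_rev, norm_sub_sq (𝕜 := ℂ), RCLike.re_to_complex]
  ring

lemma frob_add_le (X Y : Matrix m n ℂ) : frob (X + Y) ≤ frob X + frob Y := by
  simp only [frob_eq_norm_toFrobeniusLp, toFrobeniusLp_add]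
  exact norm_add_le _ _

lemma frob_smul (r : ℝ) (X : Matrix m n ℂ) : frob (r • X) = |r| * frob X := by
  rw [frob_eq_norm_toFrobeniusLp, frob_eq_norm_toFrobeniusLp, toFrobeniusLp_smul, norm_smul,
    Real.norm_eq_abs]

lemma frob_mul_le (A : Matrix l m ℂ) (B : Matrix m n ℂ) : frob (A * B) ≤ frob A * frob B := by
  simp only [frob_eq_norm_toFrobeniusLp]
  -- Mathlib's Frobenius norm of `X` is by definition `‖toFrobeniusLp X‖`.
  open scoped Matrix.Norms.Frobenius in exact frobenius_norm_mul A B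

lemma frob_vecMulVec (v : m → ℂ) (w : n → ℂ) :
    frob (vecMulVec v w) = ‖toLp 2 v‖ * ‖toLp 2 w‖ := by
  rw [← sq_eq_sq₀ (frob_nonneg _) (by positivity), ← frobSq_eq_frob_sq, mul_pow,
    EuclideanSpace.norm_sq_eq, EuclideanSpace.norm_sq_eq, Finset.sum_mul_sum]
  simp [frobSq, vecMulVec_apply, mul_pow]

lemma norm_toLp_star (v : n → ℂ) : ‖toLp 2 (star v)‖ = ‖toLp 2 v‖ := by
  simp [EuclideanSpace.norm_eq]

lemma star_dotProduct_self (v : n → ℂ) : star v ⬝ᵥ v = ((‖toLp 2 v‖ ^ 2 : ℝ) : ℂ) := by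
  have := EuclideanSpace.inner_eq_star_dotProduct (toLp 2 v) (toLp 2 v)
  rw [inner_self_eq_norm_sq_to_K, ofLp_toLp] at this
  rw [dotProduct_comm, ← this]
  norm_cast

lemma re_trace_recenter (D F₀ F : Matrix m n ℂ) (α c : ℝ) :
    2 * (trace ((D - α • F₀)ᴴ * F)).re + α * frob F ^ 2
        + (c + α * frob F₀ ^ 2 - 2 * (trace (Dᴴ * F₀)).re) =
      c + 2 * (trace (Dᴴ * (F - F₀))).re + α * frob (F - F₀) ^ 2 := by
  rw [frob_sub_sq]
  simp only [conjTranspose_sub, conjTranspose_smul, star_trivial, Matrix.sub_mul, Matrix.mul_sub,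
    Matrix.smul_mul, trace_sub, trace_smul, Complex.sub_re, Complex.real_smul,
    Complex.re_ofReal_mul]
  ring

end Frobenius

section RankOne

lemma of_ite_eq_vecMulVec_single {m n α : Type*} [DecidableEq n] [CommSemiring α]
    (v : m → α) (x : α) (j₀ : n) :
    (of fun i j => if j = j₀ then x * v i else 0) = vecMulVec v (Pi.single j₀ x) := by
  ext i j
  rw [of_apply, vecMulVec_apply, Pi.single_apply]
  split_ifs <;> simp [mul_comm]

lemma isHermitian_vecMulVec_star {n : Type*} (v : n → ℂ) :
    (vecMulVec v (star v)).IsHermitian := by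
  simp [IsHermitian]

variable {l m n : Type*} [Fintype l] [Fintype m] [Fintype n] {b : ℝ}

lemma frob_smul_vecMulVec_star (hb : 0 ≤ b) (v : m → ℂ) :
    frob (b • vecMulVec v (star v)) = b * ‖toLp 2 v‖ ^ 2 := by
  rw [frob_smul, frob_vecMulVec, norm_toLp_star, abs_of_nonneg hb, sq]

lemma frob_smul_vecMulVec_star_mul_vecMulVec (v : m → ℂ) (y : n → ℂ) :
    frob (b • vecMulVec v (star v) * vecMulVec v y) =
      frob (b • vecMulVec v (star v)) * frob (vecMulVec v y) := by
  rw [smul_mul, frob_smul, frob_smul, vecMulVec_mul_vecMulVec, star_dotProduct_self,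
    frob_vecMulVec, frob_vecMulVec, frob_vecMulVec, norm_toLp_star, toLp_smul, norm_smul,
    Complex.norm_real, Real.norm_of_nonneg (sq_nonneg _)]
  ring

lemma star_dotProduct_mul_conjTranspose_mulVec (H : Matrix l m ℂ) (e : l → ℂ) :
    star e ⬝ᵥ (H * Hᴴ) *ᵥ e = ((‖toLp 2 (Hᴴ *ᵥ e)‖ ^ 2 : ℝ) : ℂ) := by
  rw [← star_dotProduct_self, ← mulVec_mulVec, dotProduct_mulVec, star_mulVec,
    conjTranspose_conjTranspose]

lemma frob_smul_vecMulVec_star_conjTranspose_mulVec (hb : 0 ≤ b) (H : Matrix l m ℂ)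
    (e : l → ℂ) :
    frob (b • vecMulVec (Hᴴ *ᵥ e) (star (Hᴴ *ᵥ e))) = b * (star e ⬝ᵥ (H * Hᴴ) *ᵥ e).re := by
  rw [frob_smul_vecMulVec_star hb, star_dotProduct_mul_conjTranspose_mulVec, Complex.ofReal_re]

lemma frob_add_sqrt_mul_frob_sq {P : ℝ} (hP : 0 ≤ P) (hb : 0 ≤ b) (H : Matrix l m ℂ)
    (e : l → ℂ) (y : n → ℂ) :
    (frob (vecMulVec (Hᴴ *ᵥ e) y) + √P * frob (b • vecMulVec (Hᴴ *ᵥ e) (star (Hᴴ *ᵥ e)))) ^ 2 =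
      P * b ^ 2 * ‖star e ⬝ᵥ (H * Hᴴ) *ᵥ e‖ ^ 2 + frobSq (vecMulVec (Hᴴ *ᵥ e) y)
        + 2 * √P * frob (b • vecMulVec (Hᴴ *ᵥ e) (star (Hᴴ *ᵥ e)) * vecMulVec (Hᴴ *ᵥ e) y) := by
  rw [frob_smul_vecMulVec_star_mul_vecMulVec, frobSq_eq_frob_sq, frob_smul_vecMulVec_star hb,
    star_dotProduct_mul_conjTranspose_mulVec, Complex.norm_real,
    Real.norm_of_nonneg (sq_nonneg _)]
  linear_combination (b * ‖toLp 2 (Hᴴ *ᵥ e)‖ ^ 2) ^ 2 * Real.sq_sqrt hP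

end RankOne

section SurrogateRate

variable {m n : Type*} [Fintype m] [Fintype n]

def surrogateRate (c : ℝ) (C : Matrix m n ℂ) (B : Matrix m m ℂ) (F : Matrix m n ℂ) : ℝ :=
  c + 2 * (trace (Cᴴ * F)).re - (trace (Fᴴ * B * F)).re

lemma re_trace_conjTranspose_mul_mul_comm {B : Matrix m m ℂ} (hB : B.IsHermitian)
    (X Y : Matrix m n ℂ) : (trace (Xᴴ * B * Y)).re = (trace (Yᴴ * B * X)).re := by
  rw [← Complex.conj_re, starRingEnd_apply, ← trace_conjTranspose]
  simp only [conjTranspose_mul, conjTranspose_conjTranspose, hB.eq, Matrix.mul_assoc]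

lemma re_trace_conjTranspose_mul_mul_le (X : Matrix m n ℂ) (B : Matrix m m ℂ) :
    (trace (Xᴴ * B * X)).re ≤ frob B * frob X ^ 2 := by
  rw [Matrix.mul_assoc]
  calc _ ≤ frob X * frob (B * X) := (le_abs_self _).trans (abs_re_trace_conjTranspose_mul_le _ _)
    _ ≤ frob X * (frob B * frob X) := by gcongr; exacts [frob_nonneg X, frob_mul_le B X]
    _ = frob B * frob X ^ 2 := by ring

variable {c : ℝ} {C : Matrix m n ℂ} {B : Matrix m m ℂ}

lemma surrogateRate_sub_eq (hB : B.IsHermitian) (F F₀ : Matrix m n ℂ) :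
    surrogateRate c C B F - surrogateRate c C B F₀ =
      2 * (trace ((C - B * F₀)ᴴ * (F - F₀))).re - (trace ((F - F₀)ᴴ * B * (F - F₀))).re := by
  have := re_trace_conjTranspose_mul_mul_comm hB F F₀
  simp only [surrogateRate, conjTranspose_sub, conjTranspose_mul, hB.eq, Matrix.mul_sub,
    Matrix.sub_mul, trace_sub, Complex.sub_re]
  linarith

lemma surrogateRate_sub_eq_mul_add (hB : B.IsHermitian) (F F₀ : Matrix m n ℂ) :
    surrogateRate c C B F - surrogateRate c C B F₀ =
      2 * (trace (Cᴴ * (F - F₀))).re - (trace ((F - F₀)ᴴ * (B * (F + F₀)))).re := by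
  have := re_trace_conjTranspose_mul_mul_comm hB F F₀
  simp only [surrogateRate, conjTranspose_sub, Matrix.mul_sub, Matrix.sub_mul, Matrix.mul_add,
    Matrix.mul_assoc, trace_sub, trace_add, Complex.sub_re, Complex.add_re] at this ⊢
  linarith

lemma abs_surrogateRate_sub_le (hB : B.IsHermitian) {r : ℝ} {F F₀ : Matrix m n ℂ}
    (hF : frob F ≤ r) (hF₀ : frob F₀ ≤ r) :
    |surrogateRate c C B F - surrogateRate c C B F₀| ≤
      2 * (frob C + r * frob B) * frob (F - F₀) := by
  rw [surrogateRate_sub_eq_mul_add hB]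
  have hBF : frob (B * (F + F₀)) ≤ frob B * (2 * r) :=
    (frob_mul_le B (F + F₀)).trans
      (by gcongr; exacts [frob_nonneg B, (frob_add_le F F₀).trans (by linarith)])
  calc _ ≤ |2 * (trace (Cᴴ * (F - F₀))).re| + |(trace ((F - F₀)ᴴ * (B * (F + F₀)))).re| :=
        abs_sub _ _
    _ = 2 * |(trace (Cᴴ * (F - F₀))).re| + |(trace ((F - F₀)ᴴ * (B * (F + F₀)))).re| := by
        rw [abs_mul, abs_two]
    _ ≤ 2 * (frob C * frob (F - F₀)) + frob (F - F₀) * (frob B * (2 * r)) := by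
        gcongr
        · exact abs_re_trace_conjTranspose_mul_le _ _
        · exact (abs_re_trace_conjTranspose_mul_le _ _).trans
            (mul_le_mul_of_nonneg_left hBF (frob_nonneg _))
    _ = _ := by ring

end SurrogateRate

section Minorizer

variable {K m n : Type*} [Fintype K] [Fintype m] [Fintype n]

lemma re_trace_sum_smul_conjTranspose_mul (w : K → ℝ) (X : K → Matrix m n ℂ) (Y : Matrix m n ℂ) :
    (trace ((∑ k, w k • X k)ᴴ * Y)).re = ∑ k, w k * (trace ((X k)ᴴ * Y)).re := by
  simp only [conjTranspose_sum, conjTranspose_smul, star_trivial, Matrix.sum_mul, trace_sum,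
    Matrix.smul_mul, trace_smul, Complex.re_sum, Complex.real_smul, Complex.re_ofReal_mul]

variable [Nonempty K]

theorem le_smoothMin_surrogateRate {μ P L τ : ℝ} (hμ : 0 < μ) (c : K → ℝ)
    (C : K → Matrix m n ℂ) (B : K → Matrix m m ℂ) (hB : ∀ k, (B k).IsHermitian)
    (hL : ∀ k, frob (B k) ≤ L) (hτ : ∀ k, (frob (C k) + √P * frob (B k)) ^ 2 ≤ τ)
    {F F₀ : Matrix m n ℂ} (hF : frob F ^ 2 ≤ P) (hF₀ : frob F₀ ^ 2 ≤ P) :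
    smoothMin μ (fun k => surrogateRate (c k) (C k) (B k) F₀)
        + 2 * (trace ((∑ k, smoothMinWeight μ (fun k => surrogateRate (c k) (C k) (B k) F₀) k •
            (C k - B k * F₀))ᴴ * (F - F₀))).re
        - (L + 2 * μ * τ) * frob (F - F₀) ^ 2 ≤
      smoothMin μ (fun k => surrogateRate (c k) (C k) (B k) F) := by
  set R := fun (k : K) X => surrogateRate (c k) (C k) (B k) X
  set w := smoothMinWeight μ (fun k => R k F₀)
  have hτ0 : 0 ≤ τ := (sq_nonneg _).trans (hτ (Classical.arbitrary K))
  have hdiff : ∀ k, |R k F - R k F₀| ≤ 2 * √τ * frob (F - F₀) := fun k =>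
    (abs_surrogateRate_sub_le (hB k) (le_sqrt_of_sq_le hF) (le_sqrt_of_sq_le hF₀)).trans
      (by gcongr; exacts [frob_nonneg _, le_sqrt_of_sq_le (hτ k)])
  have hquad : ∀ k, w k * (trace ((F - F₀)ᴴ * B k * (F - F₀))).re ≤
      w k * (L * frob (F - F₀) ^ 2) := fun k =>
    mul_le_mul_of_nonneg_left ((re_trace_conjTranspose_mul_mul_le _ _).trans
      (by gcongr; exact hL k)) (smoothMinWeight_pos μ _ k).le
  have hlin : 2 * (trace ((∑ k, w k • (C k - B k * F₀))ᴴ * (F - F₀))).re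
      - L * frob (F - F₀) ^ 2 ≤ ∑ k, w k * (R k F - R k F₀) := by
    have := Finset.sum_le_sum fun k (_ : k ∈ Finset.univ) => hquad k
    rw [← Finset.sum_mul, sum_smoothMinWeight, one_mul] at this
    simp only [re_trace_sum_smul_conjTranspose_mul, R, surrogateRate_sub_eq (hB _), mul_sub,
      Finset.sum_sub_distrib, Finset.mul_sum, mul_left_comm _ (2 : ℝ)]
    linarith
  have hsq : μ * (2 * √τ * frob (F - F₀)) ^ 2 / 2 = 2 * μ * τ * frob (F - F₀) ^ 2 := by
    rw [mul_pow, mul_pow, sq_sqrt hτ0]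
    ring
  have := smoothMin_add_sum_smoothMinWeight_le hμ hdiff
  rw [hsq] at this
  linarith

end Minorizer

theorem stmt15_general (N M G : ℕ)
    (P μ : ℝ) (hμ : 0 < μ)
    {K : Type*} [Fintype K] [Nonempty K]
    (H : K → Matrix (Fin (M + 1)) (Fin N) ℂ) (g : K → Fin G)
    (a : K → ℂ) (b : K → ℝ) (hb : ∀ k, 0 ≤ b k) (c : K → ℝ)
    (e : Fin (M + 1) → ℂ)
    (B : K → Matrix (Fin N) (Fin N) ℂ)
    (hB : ∀ k, B k = b k • vecMulVec ((H k).conjTranspose.mulVec e)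
        (star ((H k).conjTranspose.mulVec e)))
    (C : K → Matrix (Fin N) (Fin G) ℂ)
    (hC : ∀ k, C k = Matrix.of fun i j =>
        if j = g k then starRingEnd ℂ (a k) * (H k).conjTranspose.mulVec e i else 0)
    (Rt : K → Matrix (Fin N) (Fin G) ℂ → ℝ)
    (hRt : ∀ k F, Rt k F = c k + 2 * (Matrix.trace ((C k).conjTranspose * F)).re
        - (Matrix.trace (F.conjTranspose * B k * F)).re)
    (f : Matrix (Fin N) (Fin G) ℂ → ℝ)
    (hf : ∀ F, f F = -(1 / μ) * Real.log (∑ k, Real.exp (-μ * Rt k F)))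
    (Fn : Matrix (Fin N) (Fin G) ℂ) (hFn : frobSq Fn ≤ P)
    (w : K → ℝ)
    (hw : ∀ k, w k = Real.exp (-μ * Rt k Fn) / ∑ j, Real.exp (-μ * Rt j Fn))
    (tp : K → ℝ)
    (htp : ∀ k, tp k = P * b k ^ 2 *
          ‖star e ⬝ᵥ (H k * (H k).conjTranspose).mulVec e‖ ^ 2
        + frobSq (C k) + 2 * Real.sqrt P * frob (B k * C k))
    (α : ℝ)
    (hα : α = -(Finset.univ.sup' Finset.univ_nonempty fun k =>
          b k * (star e ⬝ᵥ (H k * (H k).conjTranspose).mulVec e).re)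
        - 2 * μ * Finset.univ.sup' Finset.univ_nonempty tp)
    (D U : Matrix (Fin N) (Fin G) ℂ)
    (hD : D = ∑ k, w k • (C k - B k * Fn))
    (hU : U = D - α • Fn)
    (consF : ℝ)
    (hconsF : consF = f Fn + α * frobSq Fn
        - 2 * (Matrix.trace (D.conjTranspose * Fn)).re) :
    (∀ F : Matrix (Fin N) (Fin G) ℂ, frobSq F ≤ P →
      f F ≥ 2 * (Matrix.trace (U.conjTranspose * F)).re + α * frobSq F + consF) ∧
    f Fn = 2 * (Matrix.trace (U.conjTranspose * Fn)).re + α * frobSq Fn + consF := by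
  rw [frobSq_eq_frob_sq] at hFn
  have hP : 0 ≤ P := (sq_nonneg _).trans hFn
  have hCrank : ∀ k, C k = vecMulVec ((H k)ᴴ *ᵥ e) (Pi.single (g k) (starRingEnd ℂ (a k))) :=
    fun k => by rw [hC, of_ite_eq_vecMulVec_single]
  have hBherm : ∀ k, (B k).IsHermitian := fun k => hB k ▸
    (isHermitian_vecMulVec_star _).smul (IsSelfAdjoint.all (b k))
  have hL : ∀ k, frob (B k) ≤ Finset.univ.sup' Finset.univ_nonempty fun k =>
      b k * (star e ⬝ᵥ (H k * (H k)ᴴ) *ᵥ e).re := fun k =>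
    (Finset.le_sup' _ (Finset.mem_univ k)).trans_eq'
      (by rw [hB, frob_smul_vecMulVec_star_conjTranspose_mulVec (hb k)])
  have hτ : ∀ k, (frob (C k) + √P * frob (B k)) ^ 2 ≤ Finset.univ.sup' Finset.univ_nonempty tp :=
    fun k => (Finset.le_sup' tp (Finset.mem_univ k)).trans_eq'
      (by rw [htp, hB, hCrank, frob_add_sqrt_mul_frob_sq hP (hb k)])
  have hrecenter : ∀ F : Matrix (Fin N) (Fin G) ℂ,
      2 * (trace (Uᴴ * F)).re + α * frobSq F + consF =
        f Fn + 2 * (trace (Dᴴ * (F - Fn))).re + α * frob (F - Fn) ^ 2 := fun F => by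
    rw [hU, hconsF, frobSq_eq_frob_sq, frobSq_eq_frob_sq, re_trace_recenter]
  obtain rfl : Rt = fun k => surrogateRate (c k) (C k) (B k) := funext₂ hRt
  obtain rfl : w = smoothMinWeight μ fun k => surrogateRate (c k) (C k) (B k) Fn := funext hw
  have hf' : ∀ F, f F = smoothMin μ fun k => surrogateRate (c k) (C k) (B k) F := hf
  refine ⟨fun F hF => ?_, by rw [hrecenter Fn, sub_self]; simp [frob, frobSq]⟩
  rw [frobSq_eq_frob_sq] at hF
  rw [hrecenter, hf', hf', hD, hα]
  linarith [le_smoothMin_surrogateRate hμ c C B hBherm hL hτ hF hFn]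

/-- Theorem 3 of the paper: explicit quadratic minorizer, with closed-form
curvature `α` and linear coefficient `U`, of the log-sum-exp smoothed group objective
`f(F) = −(1/μ)ln(Σ_k exp(−μ·R̃_k(F)))` with respect to the precoding matrix `F` over the
transmit-power ball `‖F‖_F² ≤ P`; the minorizer is tight at `F = Fⁿ`. -/
theorem stmt15 (N M G : ℕ) (hN : 1 ≤ N) (hM : 1 ≤ M) (hG : 1 ≤ G)
    (P μ : ℝ) (hP : 0 < P) (hμ : 0 < μ)
    {K : Type*} [Fintype K] [Nonempty K]
    (H : K → Matrix (Fin (M + 1)) (Fin N) ℂ) (g : K → Fin G)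
    (a : K → ℂ) (b : K → ℝ) (hb : ∀ k, 0 ≤ b k) (c : K → ℝ)
    (e : Fin (M + 1) → ℂ)
    (B : K → Matrix (Fin N) (Fin N) ℂ)
    (hB : ∀ k, B k = b k • vecMulVec ((H k).conjTranspose.mulVec e)
        (star ((H k).conjTranspose.mulVec e)))
    (C : K → Matrix (Fin N) (Fin G) ℂ)
    (hC : ∀ k, C k = Matrix.of fun i j =>
        if j = g k then starRingEnd ℂ (a k) * (H k).conjTranspose.mulVec e i else 0)
    (Rt : K → Matrix (Fin N) (Fin G) ℂ → ℝ)
    (hRt : ∀ k F, Rt k F = c k + 2 * (Matrix.trace ((C k).conjTranspose * F)).re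
        - (Matrix.trace (F.conjTranspose * B k * F)).re)
    (f : Matrix (Fin N) (Fin G) ℂ → ℝ)
    (hf : ∀ F, f F = -(1 / μ) * Real.log (∑ k, Real.exp (-μ * Rt k F)))
    (Fn : Matrix (Fin N) (Fin G) ℂ) (hFn : frobSq Fn ≤ P)
    (w : K → ℝ)
    (hw : ∀ k, w k = Real.exp (-μ * Rt k Fn) / ∑ j, Real.exp (-μ * Rt j Fn))
    (tp : K → ℝ)
    (htp : ∀ k, tp k = P * b k ^ 2 *
          ‖star e ⬝ᵥ (H k * (H k).conjTranspose).mulVec e‖ ^ 2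
        + frobSq (C k) + 2 * Real.sqrt P * frob (B k * C k))
    (α : ℝ)
    (hα : α = -(Finset.univ.sup' Finset.univ_nonempty fun k =>
          b k * (star e ⬝ᵥ (H k * (H k).conjTranspose).mulVec e).re)
        - 2 * μ * Finset.univ.sup' Finset.univ_nonempty tp)
    (D U : Matrix (Fin N) (Fin G) ℂ)
    (hD : D = ∑ k, w k • (C k - B k * Fn))
    (hU : U = D - α • Fn)
    (consF : ℝ)
    (hconsF : consF = f Fn + α * frobSq Fn
        - 2 * (Matrix.trace (D.conjTranspose * Fn)).re) :
    (∀ F : Matrix (Fin N) (Fin G) ℂ, frobSq F ≤ P →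
      f F ≥ 2 * (Matrix.trace (U.conjTranspose * F)).re + α * frobSq F + consF) ∧
    f Fn = 2 * (Matrix.trace (U.conjTranspose * Fn)).re + α * frobSq Fn + consF :=
  stmt15_general N M G P μ hμ H g a b hb c e B hB C hC Rt hRt f hf Fn hFn w hw tp htp α hα D U hD hU
    consF hconsF
end
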